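/- arXiv:1612.01566 — 2 statements merged into one kernel-verified Lean document; each statement's English description precedes it below -/
import Mathlib

section
/- Let f : [0,∞) → ℝ be a continuous, positive function, and let b, C₀ > 0 be constants. Suppose that for all 0 ≤ t₀ ≤ t₁ ≤ t₂ we have f(t₂) + b ∫_{t₁}^{t₂} f(s) ds ≤ f(t₁) + C₀ (t₂ − t₁) f(t₀). Then for all t ≥ t₀ we have f(t) ≤ (1 + C₀ b⁻¹) f(t₀). -/
open MeasureTheory Set

/- Suppose `f t > (1 + C₀/b) f(t₀)` and take the last time `u ∈ [t₀, t]` with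
`f u ≤ (1 + C₀/b) f(t₀)`. On `(u, t]` we have `f ≥ (C₀/b) f(t₀)`, so the damping term `b ∫ᵤᵗ f`
absorbs the forcing `C₀ (t - u) f(t₀)` and the hypothesis with `t₁ = u`, `t₂ = t` gives
`f t ≤ f u`, a contradiction. -/

theorem ContinuousOn.exists_forall_Ioc_lt_of_le {α β : Type*}
    [ConditionallyCompleteLinearOrder α] [TopologicalSpace α] [OrderTopology α]
    [LinearOrder β] [TopologicalSpace β] [OrderClosedTopology β]
    {f : α → β} {a b : α} {M : β} (hab : a ≤ b) (hf : ContinuousOn f (Icc a b))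
    (ha : f a ≤ M) : ∃ u ∈ Icc a b, f u ≤ M ∧ ∀ s ∈ Ioc u b, M < f s := by
  set S := Icc a b ∩ f ⁻¹' Iic M
  have hS_closed : IsClosed S := hf.preimage_isClosed_of_isClosed isClosed_Icc isClosed_Iic
  have hS_bdd : BddAbove S := ⟨b, fun x hx => hx.1.2⟩
  obtain ⟨hu_mem, hu_le⟩ := hS_closed.csSup_mem ⟨a, ⟨le_rfl, hab⟩, ha⟩ hS_bdd
  refine ⟨sSup S, hu_mem, hu_le, fun s hs => not_le.1 fun hfs => ?_⟩
  exact hs.1.not_ge (le_csSup hS_bdd ⟨⟨hu_mem.1.trans hs.1.le, hs.2⟩, hfs⟩)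

theorem sub_mul_le_intervalIntegral_of_le_on_Ioo {f : ℝ → ℝ} {a b c : ℝ} (hab : a ≤ b)
    (hf : IntervalIntegrable f volume a b) (h : ∀ x ∈ Ioo a b, c ≤ f x) :
    (b - a) * c ≤ ∫ x in a..b, f x := by
  simpa using intervalIntegral.integral_mono_on_of_le_Ioo hab intervalIntegrable_const hf h

/-- Gronwall-type lemma: uniform bound. -/
theorem stmt0 (f : ℝ → ℝ) (b C₀ : ℝ)
    (hf_cont : ContinuousOn f (Set.Ici 0))
    (hf_pos : ∀ t : ℝ, 0 ≤ t → 0 < f t)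
    (hb : 0 < b) (hC₀ : 0 < C₀)
    (hineq : ∀ t₀ t₁ t₂ : ℝ, 0 ≤ t₀ → t₀ ≤ t₁ → t₁ ≤ t₂ →
      f t₂ + b * ∫ s in t₁..t₂, f s ≤ f t₁ + C₀ * (t₂ - t₁) * f t₀) :
    ∀ t₀ t : ℝ, 0 ≤ t₀ → t₀ ≤ t → f t ≤ (1 + C₀ * b⁻¹) * f t₀ := by
  intro t₀ t ht₀ ht₀t
  by_contra! hft
  have hft₀ : 0 < f t₀ := hf_pos t₀ ht₀
  have hCb : 0 < C₀ * b⁻¹ := by positivity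
  have hcont : ContinuousOn f (Icc t₀ t) := hf_cont.mono fun x hx => ht₀.trans hx.1
  obtain ⟨u, ⟨ht₀u, hut⟩, hfu, hf_gt⟩ :=
    hcont.exists_forall_Ioc_lt_of_le (M := (1 + C₀ * b⁻¹) * f t₀) ht₀t
      (le_mul_of_one_le_left hft₀.le (by linarith))
  have hlow : ∀ s ∈ Ioo u t, C₀ * b⁻¹ * f t₀ ≤ f s := fun s hs =>
    le_trans (by nlinarith) (hf_gt s ⟨hs.1, hs.2.le⟩).le
  have hint : (t - u) * (C₀ * b⁻¹ * f t₀) ≤ ∫ s in u..t, f s :=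
    sub_mul_le_intervalIntegral_of_le_on_Ioo hut
      ((hcont.mono (Icc_subset_Icc_left ht₀u)).intervalIntegrable_of_Icc hut) hlow
  have hdamp : b * ((t - u) * (C₀ * b⁻¹ * f t₀)) = C₀ * (t - u) * f t₀ := by field_simp
  linarith [hineq t₀ u t ht₀ ht₀u hut, mul_le_mul_of_nonneg_left hint hb.le]
end

section
/- Let f : [0,∞) → ℝ be a continuous, positive function and E₀, b, p, C₀ > 0 constants. Assume: (i) for all 0 ≤ t₁ ≤ t₂, f(t₂) + b ∫_{t₁}^{t₂} f(s) ds ≤ f(t₁) + E₀ (t₂ − t₁)(t₁ + 1)^{−p}; and (ii) for all 0 ≤ t₀ ≤ t₁ ≤ t₂, f(t₂) + b ∫_{t₁}^{t₂} f(s) ds ≤ f(t₁) + C₀ (t₂ − t₁) f(t₀). Then there exists a constant C = C(C₀, E₀, b, p) > 0 such that f(t) ≤ C (f(0) + E₀)(1 + t)^{−p} for all t ≥ 0. -/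
/-!
Write `σ(t) = E₀ (1 + t) ^ (-p)` for the source. Over a window `[t, t + 2 / b]`, at a minimum point
`s` of `f` the dissipation term gives `2 f(s) ≤ f(t) + (2 / b) σ(t)`, and from `s` on `f` grows by at
most `(2 / b) σ(t)`; so each window halves `f` up to a source term. A block of `J + 1` windows with
`2 ^ p < 2 ^ J` therefore contracts `f` by more than the factor `2 ^ p` that the weight
`(1 + t) ^ (-p)` loses over one block once `t` exceeds two blocks, and the bound
`f(t) ≤ M (f(0) + E₀) (1 + t) ^ (-p)`, trivial on the first two blocks, propagates block by block.
-/

open MeasureTheory Set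

def DissipationInequality (f : ℝ → ℝ) (b : ℝ) (σ : ℝ → ℝ) : Prop :=
  ∀ t₁ t₂ : ℝ, 0 ≤ t₁ → t₁ ≤ t₂ → f t₂ + b * ∫ s in t₁..t₂, f s ≤ f t₁ + (t₂ - t₁) * σ t₁

theorem forall_of_forall_le_of_sub {P : ℝ → Prop} {a T : ℝ} (hT : 0 < T) (hbase : ∀ t ≤ a, P t)
    (hstep : ∀ t, a < t → P (t - T) → P t) (t : ℝ) : P t := by
  obtain ⟨n, hn⟩ := Archimedean.arch (t - a) hT
  induction n generalizing t with
  | zero => exact hbase t (by simp only [zero_smul] at hn; linarith)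
  | succ n ih =>
    by_cases hta : t ≤ a
    · exact hbase t hta
    · exact hstep t (not_le.1 hta) (ih _ (by rw [succ_nsmul] at hn; linarith))

theorem rpow_neg_le_of_le_mul {x y c p : ℝ} (hx : 0 < x) (hc : 0 < c) (hxy : x ≤ c * y)
    (hp : 0 ≤ p) : y ^ (-p) ≤ c ^ p * x ^ (-p) := by
  have hy : 0 < y := pos_of_mul_pos_right (hx.trans_le hxy) hc.le
  calc y ^ (-p) = c ^ p * (c * y) ^ (-p) := by
        rw [Real.mul_rpow hc.le hy.le, ← mul_assoc, ← Real.rpow_add hc, add_neg_cancel,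
          Real.rpow_zero, one_mul]
    _ ≤ c ^ p * x ^ (-p) := mul_le_mul_of_nonneg_left
        (Real.rpow_le_rpow_of_nonpos hx hxy (neg_nonpos.2 hp)) (by positivity)

namespace DissipationInequality

variable {f σ : ℝ → ℝ} {b : ℝ}

theorem le_add_mul (h : DissipationInequality f b σ) (hb : 0 ≤ b) (hf : ∀ t, 0 ≤ t → 0 ≤ f t)
    {t₁ t₂ : ℝ} (ht₁ : 0 ≤ t₁) (ht : t₁ ≤ t₂) : f t₂ ≤ f t₁ + (t₂ - t₁) * σ t₁ := by
  have hint : 0 ≤ ∫ s in t₁..t₂, f s :=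
    intervalIntegral.integral_nonneg ht fun s hs => hf s (ht₁.trans hs.1)
  nlinarith [h t₁ t₂ ht₁ ht, mul_nonneg hb hint]

theorem le_half_add (h : DissipationInequality f b σ) (hb : 0 < b)
    (hf_cont : ContinuousOn f (Ici 0)) (hf : ∀ t, 0 ≤ t → 0 ≤ f t)
    (hσ : ∀ t, 0 ≤ t → 0 ≤ σ t) (hσ_anti : AntitoneOn σ (Ici 0)) {t : ℝ} (ht : 0 ≤ t) :
    f (t + 2 / b) ≤ f t / 2 + 3 / b * σ t := by
  have hL : t ≤ t + 2 / b := le_add_of_nonneg_right (by positivity)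
  have hcont : ContinuousOn f (Icc t (t + 2 / b)) := hf_cont.mono fun x hx => ht.trans hx.1
  obtain ⟨s, hs, hmin⟩ := isCompact_Icc.exists_isMinOn (nonempty_Icc.2 hL) hcont
  have hs₀ : 0 ≤ s := ht.trans hs.1
  have hmin_le_int : 2 / b * f s ≤ ∫ x in t..t + 2 / b, f x := by
    have := intervalIntegral.integral_mono_on hL (intervalIntegrable_const (μ := volume))
      (hcont.intervalIntegrable_of_Icc hL) fun x hx => hmin hx
    simpa using this
  have hfs : 2 * f s ≤ f t + 2 / b * σ t := by
    have hb_mul : b * (2 / b * f s) = 2 * f s := by field_simp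
    have := h t (t + 2 / b) ht hL
    rw [add_sub_cancel_left] at this
    nlinarith [mul_le_mul_of_nonneg_left hmin_le_int hb.le, hf (t + 2 / b) (ht.trans hL)]
  have hσs : (t + 2 / b - s) * σ s ≤ 2 / b * σ t :=
    mul_le_mul (by linarith [hs.1]) (hσ_anti ht hs₀ hs.1) (hσ s hs₀) (by positivity)
  have hgrow := h.le_add_mul hb.le hf hs₀ hs.2
  have h3 : 3 / b = 3 / 2 * (2 / b) := by ring
  rw [h3]
  linarith

theorem le_div_two_pow_add (h : DissipationInequality f b σ) (hb : 0 < b)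
    (hf_cont : ContinuousOn f (Ici 0)) (hf : ∀ t, 0 ≤ t → 0 ≤ f t)
    (hσ : ∀ t, 0 ≤ t → 0 ≤ σ t) (hσ_anti : AntitoneOn σ (Ici 0)) {t : ℝ} (ht : 0 ≤ t) (n : ℕ) :
    f (t + n * (2 / b)) ≤ f t / 2 ^ n + 6 / b * σ t := by
  induction n with
  | zero =>
    have := hσ t ht
    simp only [CharP.cast_eq_zero, zero_mul, add_zero, pow_zero, div_one]
    linarith [mul_nonneg (by positivity : (0 : ℝ) ≤ 6 / b) this]
  | succ n ih =>
    have htn : 0 ≤ t + n * (2 / b) := by positivity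
    have hσn : σ (t + n * (2 / b)) ≤ σ t :=
      hσ_anti ht htn (le_add_of_nonneg_right (by positivity))
    calc f (t + (n + 1 : ℕ) * (2 / b)) = f (t + n * (2 / b) + 2 / b) := by push_cast; ring_nf
      _ ≤ f (t + n * (2 / b)) / 2 + 3 / b * σ (t + n * (2 / b)) :=
        h.le_half_add hb hf_cont hf hσ hσ_anti htn
      _ ≤ (f t / 2 ^ n + 6 / b * σ t) / 2 + 3 / b * σ t := by gcongr
      _ = f t / 2 ^ (n + 1) + 6 / b * σ t := by ring

theorem le_mul_one_add_rpow_neg_of_le {E₀ p a : ℝ}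
    (h : DissipationInequality f b fun t => E₀ * (t + 1) ^ (-p)) (hb : 0 ≤ b) (hE₀ : 0 ≤ E₀)
    (hp : 0 ≤ p) (hf : ∀ t, 0 ≤ t → 0 ≤ f t) {t : ℝ} (ht : 0 ≤ t) (hta : t ≤ a) :
    f t ≤ (1 + a) ^ p * (1 + a) * (f 0 + E₀) * (1 + t) ^ (-p) := by
  have hweight : 1 ≤ (1 + a) ^ p * (1 + t) ^ (-p) := by
    simpa using rpow_neg_le_of_le_mul (x := 1 + t) (y := 1) (by linarith) (by linarith)
      (by linarith) hp
  have hgrow := h.le_add_mul hb hf le_rfl ht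
  simp only [zero_add, Real.one_rpow, mul_one, sub_zero] at hgrow
  calc f t ≤ (1 + a) * (f 0 + E₀) := by nlinarith [hf 0 le_rfl]
    _ ≤ (1 + a) * (f 0 + E₀) * ((1 + a) ^ p * (1 + t) ^ (-p)) :=
      le_mul_of_one_le_right (mul_nonneg (by linarith) (by linarith [hf 0 le_rfl])) hweight
    _ = (1 + a) ^ p * (1 + a) * (f 0 + E₀) * (1 + t) ^ (-p) := by ring

theorem exists_le_mul_one_add_rpow_neg {E₀ p : ℝ}
    (h : DissipationInequality f b fun t => E₀ * (t + 1) ^ (-p)) (hb : 0 < b) (hE₀ : 0 ≤ E₀)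
    (hp : 0 ≤ p) (hf_cont : ContinuousOn f (Ici 0)) (hf : ∀ t, 0 ≤ t → 0 ≤ f t) :
    ∃ C, 0 < C ∧ ∀ t, 0 ≤ t → f t ≤ C * (f 0 + E₀) * (1 + t) ^ (-p) := by
  have hσ : ∀ t : ℝ, 0 ≤ t → 0 ≤ E₀ * (t + 1) ^ (-p) := fun t ht => by positivity
  have hσ_anti : AntitoneOn (fun t : ℝ => E₀ * (t + 1) ^ (-p)) (Ici 0) := fun x hx y _ hxy =>
    mul_le_mul_of_nonneg_left
      (Real.rpow_le_rpow_of_nonpos (by linarith [mem_Ici.1 hx]) (by linarith) (by linarith)) hE₀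
  obtain ⟨J, hJ⟩ := pow_unbounded_of_one_lt ((2 : ℝ) ^ p) one_lt_two
  set T : ℝ := (J + 1 : ℕ) * (2 / b) with hT_def
  have hT : 0 < T := by positivity
  set K := f 0 + E₀
  have hK : E₀ ≤ K := le_add_of_nonneg_left (hf 0 le_rfl)
  have hK₀ : 0 ≤ K := hE₀.trans hK
  set M := (1 + 2 * T) ^ p * (1 + 2 * T) + 12 / b * 2 ^ p with hM_def
  refine ⟨M, by positivity, forall_of_forall_le_of_sub hT (a := 2 * T) (fun t htT ht => ?_)
    (fun t htT ih ht => ?_)⟩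
  · calc f t ≤ (1 + 2 * T) ^ p * (1 + 2 * T) * K * (1 + t) ^ (-p) :=
          h.le_mul_one_add_rpow_neg_of_le hb.le hE₀ hp hf ht htT
      _ ≤ M * K * (1 + t) ^ (-p) := by
        gcongr
        exact le_add_of_nonneg_right (by positivity)
  · have htT₀ : 0 ≤ t - T := by linarith
    have hstep := h.le_div_two_pow_add hb hf_cont hf hσ hσ_anti htT₀ (J + 1)
    rw [← hT_def, sub_add_cancel, add_comm (t - T)] at hstep
    have hweight : (1 + (t - T)) ^ (-p) ≤ 2 ^ p * (1 + t) ^ (-p) :=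
      rpow_neg_le_of_le_mul (by linarith) two_pos (by linarith) hp
    have hcontract : 2 ^ p / 2 ^ (J + 1) ≤ (1 / 2 : ℝ) := by
      rw [div_le_iff₀ (by positivity), pow_succ]; linarith
    have hM : 6 / b * 2 ^ p ≤ M / 2 := by
      have : 0 ≤ (1 + 2 * T) ^ p * (1 + 2 * T) := by positivity
      linarith [hM_def, show 12 / b * 2 ^ p = 2 * (6 / b * 2 ^ p) by ring]
    have := ih htT₀
    calc f t ≤ f (t - T) / 2 ^ (J + 1) + 6 / b * (E₀ * (1 + (t - T)) ^ (-p)) := hstep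
      _ ≤ M * K * (1 + (t - T)) ^ (-p) / 2 ^ (J + 1) + 6 / b * (K * (1 + (t - T)) ^ (-p)) := by
        gcongr
      _ = (M / 2 ^ (J + 1) + 6 / b) * K * (1 + (t - T)) ^ (-p) := by ring
      _ ≤ (M / 2 ^ (J + 1) + 6 / b) * K * (2 ^ p * (1 + t) ^ (-p)) := by gcongr
      _ = (M * (2 ^ p / 2 ^ (J + 1)) + 6 / b * 2 ^ p) * (K * (1 + t) ^ (-p)) := by ring
      _ ≤ (M * (1 / 2) + M / 2) * (K * (1 + t) ^ (-p)) := by gcongr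
      _ = M * K * (1 + t) ^ (-p) := by ring

end DissipationInequality

theorem stmt1_general (f : ℝ → ℝ) (E₀ b p : ℝ)
    (hf_cont : ContinuousOn f (Set.Ici 0))
    (hf_pos : ∀ t : ℝ, 0 ≤ t → 0 < f t)
    (hE₀ : 0 < E₀) (hb : 0 < b) (hp : 0 < p)
    (hineq1 : ∀ t₁ t₂ : ℝ, 0 ≤ t₁ → t₁ ≤ t₂ →
      f t₂ + b * ∫ s in t₁..t₂, f s ≤ f t₁ + E₀ * (t₂ - t₁) * (t₁ + 1) ^ (-p)) :
    ∃ C : ℝ, 0 < C ∧ ∀ t : ℝ, 0 ≤ t → f t ≤ C * (f 0 + E₀) * (1 + t) ^ (-p) := by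
  have h : DissipationInequality f b fun t => E₀ * (t + 1) ^ (-p) :=
    fun t₁ t₂ ht₁ ht => (hineq1 t₁ t₂ ht₁ ht).trans_eq (by ring)
  exact h.exists_le_mul_one_add_rpow_neg hb hE₀.le hp.le hf_cont fun t ht => (hf_pos t ht).le

/-- Gronwall-type lemma: polynomial decay. -/
theorem stmt1 (f : ℝ → ℝ) (E₀ b p C₀ : ℝ)
    (hf_cont : ContinuousOn f (Set.Ici 0))
    (hf_pos : ∀ t : ℝ, 0 ≤ t → 0 < f t)
    (hE₀ : 0 < E₀) (hb : 0 < b) (hp : 0 < p) (hC₀ : 0 < C₀)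
    (hineq1 : ∀ t₁ t₂ : ℝ, 0 ≤ t₁ → t₁ ≤ t₂ →
      f t₂ + b * ∫ s in t₁..t₂, f s ≤ f t₁ + E₀ * (t₂ - t₁) * (t₁ + 1) ^ (-p))
    (hineq2 : ∀ t₀ t₁ t₂ : ℝ, 0 ≤ t₀ → t₀ ≤ t₁ → t₁ ≤ t₂ →
      f t₂ + b * ∫ s in t₁..t₂, f s ≤ f t₁ + C₀ * (t₂ - t₁) * f t₀) :
    ∃ C : ℝ, 0 < C ∧ ∀ t : ℝ, 0 ≤ t → f t ≤ C * (f 0 + E₀) * (1 + t) ^ (-p) :=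
  stmt1_general f E₀ b p hf_cont hf_pos hE₀ hb hp hineq1
end
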